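/- arXiv:math/0510082 — 2 statements merged into one kernel-verified Lean document; each statement's English description precedes it below -/
import Mathlib

section
/- For every integer m: ψ̄((ST)^{2m}) = T·S^{-m}·T⁻¹ and ψ̄((ST)^{2m+1}) = T²·S^{-m}. -/
noncomputable section

/-- The action of `Equiv.Perm X` on `X → G` by permuting coordinates. -/
def permAut (X G : Type) [Group G] : Equiv.Perm X →* MulAut (X → G) where
  toFun σ :=
  { toFun := fun f => f ∘ ⇑σ⁻¹
    invFun := fun f => f ∘ ⇑σ
    left_inv := fun f => by funext x; simp
    right_inv := fun f => by funext x; simp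
    map_mul' := fun f g => rfl }
  map_one' := by ext f x; simp
  map_mul' := fun σ τ => by
    ext f x
    simp [Function.comp, mul_inv_rev]

/-- The wreath product `G ≀ C₂` with base alphabet `Bool`. -/
abbrev Wr (G : Type) [Group G] := (Bool → G) ⋊[permAut Bool G] Equiv.Perm Bool

/-- `pair g₀ g₁` is the element `⟨g₀, g₁⟩` of the base group. -/
def pair {G : Type} [Group G] (g₀ g₁ : G) : Bool → G := fun x => bif x then g₁ else g₀

/-- The nontrivial element of `Sym({0,1})`. -/
def σswap : Equiv.Perm Bool := Equiv.swap false true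

namespace Rabbit

/-- The free group on two generators `S`, `T`. -/
abbrev F := FreeGroup Bool

def Sg : F := FreeGroup.of false
def Tg : F := FreeGroup.of true

/-- The wreath recursion `Φ(T) = ⟨1, S⁻¹T⁻¹⟩σ`, `Φ(S) = ⟨T, 1⟩`. -/
def Phi : F →* Wr F := FreeGroup.lift fun x =>
  if x then ⟨pair 1 (Sg⁻¹ * Tg⁻¹), σswap⟩ else ⟨pair Tg 1, 1⟩

/-- The section `g|ₓ`. -/
def sec (g : F) (x : Bool) : F := (Phi g).left x

/-- `Φ(g)` is inactive. -/
def inactive (g : F) : Prop := (Phi g).right = 1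

open scoped Classical in
/-- The map `ψ̄`. -/
def psibar (g : F) : F := if inactive g then sec g false else Tg * sec g false

end Rabbit

namespace Rabbit

lemma phi_S : Phi Sg = ⟨pair Tg 1, 1⟩ := by
  simp [Phi, Sg]

lemma phi_T : Phi Tg = ⟨pair 1 (Sg⁻¹ * Tg⁻¹), σswap⟩ := by
  simp [Phi, Tg]

lemma phi_ST : Phi (Sg * Tg) = ⟨pair Tg (Sg⁻¹ * Tg⁻¹), σswap⟩ := by
  rw [map_mul, phi_S, phi_T, SemidirectProduct.mul_def]
  ext x
  · cases x <;> simp [pair, permAut, Equiv.Perm.one_symm]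
  · simp

lemma phi_ST2 : Phi ((Sg * Tg) ^ 2) =
    SemidirectProduct.inl (pair (Tg * Sg⁻¹ * Tg⁻¹) Sg⁻¹) := by
  rw [sq, map_mul, phi_ST, SemidirectProduct.mul_def]
  ext x
  · cases x <;> simp [pair, permAut, σswap, mul_assoc] <;> rfl
  · simp [σswap]

lemma pair_zpow {G : Type} [Group G] (a b : G) (m : ℤ) :
    (pair a b) ^ m = pair (a ^ m) (b ^ m) := by
  funext x; cases x <;> simp [pair]

lemma phi_ST2m (m : ℤ) : Phi ((Sg * Tg) ^ (2 * m)) =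
    SemidirectProduct.inl (pair (Tg * Sg ^ (-m) * Tg⁻¹) (Sg ^ (-m))) := by
  rw [zpow_mul, map_zpow, show ((Sg*Tg):F) ^ (2:ℤ) = (Sg*Tg) ^ (2:ℕ) by norm_cast,
    phi_ST2, ← map_zpow, pair_zpow]
  congr 1
  funext x
  cases x
  · show (Tg * Sg⁻¹ * Tg⁻¹) ^ m = Tg * Sg ^ (-m) * Tg⁻¹
    rw [conj_zpow, inv_zpow, zpow_neg]
  · show (Sg⁻¹) ^ m = Sg ^ (-m)
    rw [inv_zpow, zpow_neg]

lemma sigma_ne : σswap ≠ 1 := by decide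

end Rabbit

open Rabbit in
theorem stmt4 : ∀ m : ℤ,
    psibar ((Sg * Tg) ^ (2 * m)) = Tg * Sg ^ (-m) * Tg⁻¹ ∧
    psibar ((Sg * Tg) ^ (2 * m + 1)) = Tg ^ 2 * Sg ^ (-m) := by
  intro m
  have h2m := phi_ST2m m
  have hodd : Phi ((Sg * Tg) ^ (2 * m + 1)) =
      ⟨pair (Tg * Sg ^ (-m)) (Sg ^ (-m) * (Sg⁻¹ * Tg⁻¹)), σswap⟩ := by
    rw [zpow_add_one, map_mul, h2m, phi_ST, SemidirectProduct.mul_def]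
    congr 1
    · funext x
      erw [SemidirectProduct.left_inl, SemidirectProduct.right_inl]
      cases x <;>
        simp [pair, permAut, σswap, mul_assoc, SemidirectProduct.left_inl,
          SemidirectProduct.right_inl, Equiv.Perm.one_symm]
  constructor
  · have hin : inactive ((Sg * Tg) ^ (2 * m)) := by
      simp [inactive, h2m]
    rw [psibar, if_pos hin, sec, h2m, SemidirectProduct.left_inl]
    simp [pair]
  · have hin : ¬ inactive ((Sg * Tg) ^ (2 * m + 1)) := by
      simp [inactive, hodd, sigma_ne]
    rw [psibar, if_neg hin, sec, hodd]
    simp [pair, sq, mul_assoc]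
end
end

section
/- Set w_α = γβγ⁻¹αγβα and w_β = γ⁻¹αγβα in F₃. Then Λ₁(α) = Λ_A(w_α⁻¹ α w_α), Λ₁(β) = Λ_A(w_β⁻¹ β w_β), and Λ₁(γ) = Λ_A(α⁻¹ γ α). In particular, the images Λ₁(F₃) and Λ_A(F₃) coincide as subgroups of the permutation group of {0,1}*. -/
noncomputable section

namespace TwoRec

/-- The free group on three generators `α`, `β`, `γ`. -/
abbrev F3 := FreeGroup (Fin 3)

def ga : F3 := FreeGroup.of 0
def gb : F3 := FreeGroup.of 1
def gc : F3 := FreeGroup.of 2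

/-- The airplane recursion:
`Φ_A(α) = ⟨α⁻¹, γα⟩σ`, `Φ_A(β) = ⟨α, 1⟩`, `Φ_A(γ) = ⟨1, γβγ⁻¹⟩`. -/
def PhiA : F3 →* Wr F3 :=
  FreeGroup.lift ![⟨pair ga⁻¹ (gc * ga), σswap⟩, ⟨pair ga 1, 1⟩,
    ⟨pair 1 (gc * gb * gc⁻¹), 1⟩]

/-- The twisted rabbit recursion:
`Φ₁(α) = ⟨α⁻¹β⁻¹, γβα⟩σ`, `Φ₁(β) = ⟨βαβ⁻¹, 1⟩`, `Φ₁(γ) = ⟨βαβα⁻¹β⁻¹, 1⟩`. -/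
def Phi1 : F3 →* Wr F3 :=
  FreeGroup.lift ![⟨pair (ga⁻¹ * gb⁻¹) (gc * gb * ga), σswap⟩,
    ⟨pair (gb * ga * gb⁻¹) 1, 1⟩, ⟨pair (gb * ga * gb * ga⁻¹ * gb⁻¹) 1, 1⟩]

/-- The action on finite binary words associated with a wreath recursion `Φ`. -/
def Lam (Φ : F3 →* Wr F3) : F3 → List Bool → List Bool
  | _, [] => []
  | g, x :: v => (Φ g).right x :: Lam Φ ((Φ g).left x) v

/-- `w_α = γβγ⁻¹αγβα`. -/
def wa : F3 := gc * gb * gc⁻¹ * ga * gc * gb * ga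

/-- `w_β = γ⁻¹αγβα`. -/
def wb : F3 := gc⁻¹ * ga * gc * gb * ga

end TwoRec

/-!
The substitution `θ : α ↦ w_α⁻¹ α w_α, β ↦ w_β⁻¹ β w_β, γ ↦ α⁻¹ γ α` intertwines the two
recursions: `Φ_A ∘ θ = θ̃ ∘ Φ₁`, where `θ̃` applies `θ` in both coordinates and leaves the
permutation alone. Induction on the length of a word then gives `Λ₁ = Λ_A ∘ θ`, and `θ` is
surjective (it has an explicit section), so the two actions have the same image.
-/

namespace Wr

variable {G H : Type} [Group G] [Group H]

def map (f : G →* H) : Wr G →* Wr H :=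
  SemidirectProduct.map (MonoidHom.compLeft f Bool) (MonoidHom.id _) fun _ => rfl

@[simp] lemma map_left (f : G →* H) (w : Wr G) : (map f w).left = f ∘ w.left := rfl

@[simp] lemma map_right (f : G →* H) (w : Wr G) : (map f w).right = w.right := rfl

@[simp] lemma mul_left_apply (a b : Wr G) (x : Bool) :
    (a * b).left x = a.left x * b.left (a.right⁻¹ x) := rfl

end Wr

@[simp] lemma pair_false {G : Type} [Group G] (g₀ g₁ : G) : pair g₀ g₁ false = g₀ := rfl

@[simp] lemma pair_true {G : Type} [Group G] (g₀ g₁ : G) : pair g₀ g₁ true = g₁ := rfl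

@[simp] lemma σswap_inv : σswap⁻¹ = σswap := Equiv.swap_inv _ _

@[simp] lemma σswap_mul_self : σswap * σswap = 1 := Equiv.swap_mul_self _ _

@[simp] lemma σswap_false : σswap false = true := rfl

@[simp] lemma σswap_true : σswap true = false := rfl

namespace TwoRec

lemma lam_eq_lam_comp {Φ Ψ : F3 →* Wr F3} {θ : F3 →* F3}
    (h : Ψ.comp θ = (Wr.map θ).comp Φ) : Lam Φ = Lam Ψ ∘ θ := by
  funext g v
  induction v generalizing g with
  | nil => rfl
  | cons x v ih =>
    have hg : Ψ (θ g) = Wr.map θ (Φ g) := DFunLike.congr_fun h g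
    simp only [Function.comp_apply, Lam, hg, Wr.map_right, Wr.map_left, ih]

lemma range_lam_eq_of_surjective {Φ Ψ : F3 →* Wr F3} {θ : F3 →* F3}
    (h : Ψ.comp θ = (Wr.map θ).comp Φ) (hθ : Function.Surjective θ) :
    Set.range (Lam Φ) = Set.range (Lam Ψ) := by
  rw [lam_eq_lam_comp h, hθ.range_comp]

lemma F3.hom_ext {G : Type} [Group G] {f g : F3 →* G} (ha : f ga = g ga) (hb : f gb = g gb)
    (hc : f gc = g gc) : f = g :=
  FreeGroup.ext_hom _ _ fun i => by fin_cases i <;> assumption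

@[simp] lemma lift_ga {G : Type} [Group G] (x y z : G) : FreeGroup.lift ![x, y, z] ga = x := by
  simp [ga]

@[simp] lemma lift_gb {G : Type} [Group G] (x y z : G) : FreeGroup.lift ![x, y, z] gb = y := by
  simp [gb]

@[simp] lemma lift_gc {G : Type} [Group G] (x y z : G) : FreeGroup.lift ![x, y, z] gc = z := by
  simp [gc]

def theta : F3 →* F3 :=
  FreeGroup.lift ![wa⁻¹ * ga * wa, wb⁻¹ * gb * wb, ga⁻¹ * gc * ga]

lemma PhiA_comp_theta : PhiA.comp theta = (Wr.map theta).comp Phi1 := by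
  refine F3.hom_ext ?_ ?_ ?_ <;>
    refine SemidirectProduct.ext (funext fun x => ?_) (by simp [PhiA, Phi1, theta, wa, wb]) <;>
    cases x <;> simp [PhiA, Phi1, theta, wa, wb] <;> group

/-- `u` is a preimage of `α`, so by `θ γ = α⁻¹ γ α` the conjugate `u γ u⁻¹` is a preimage of `γ`. -/
def thetaSection : F3 →* F3 :=
  let u := (gc * gb * ga * gb) * ga * (gc * gb * ga * gb)⁻¹
  FreeGroup.lift ![u, (u * gb * ga) * gb * (u * gb * ga)⁻¹, u * gc * u⁻¹]

lemma theta_comp_thetaSection : theta.comp thetaSection = MonoidHom.id F3 := by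
  refine F3.hom_ext ?_ ?_ ?_ <;> simp [thetaSection, theta, wa, wb] <;> group

lemma theta_surjective : Function.Surjective theta :=
  fun g => ⟨thetaSection g, DFunLike.congr_fun theta_comp_thetaSection g⟩

end TwoRec

open TwoRec in
theorem stmt8 :
    Lam Phi1 ga = Lam PhiA (wa⁻¹ * ga * wa) ∧
    Lam Phi1 gb = Lam PhiA (wb⁻¹ * gb * wb) ∧
    Lam Phi1 gc = Lam PhiA (ga⁻¹ * gc * ga) ∧
    Set.range (Lam Phi1) = Set.range (Lam PhiA) := by
  have hlam := lam_eq_lam_comp PhiA_comp_theta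
  refine ⟨?_, ?_, ?_, range_lam_eq_of_surjective PhiA_comp_theta theta_surjective⟩ <;>
    simp [hlam, theta]
end
end
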